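/- The set of permutations σ of the 20-element set A of lattice points of the Cayley polytope C that extend to an affine self-map of ℝ^5 (i.e., for which there exists an affine map f : ℝ^5 → ℝ^5 with f(p) = σ(p) for all p ∈ A) forms a group under composition, and this group is isomorphic to S4 × ℤ/2ℤ; in particular it has order 48. -/

import Mathlib

open scoped Pointwise

attribute [local instance] Classical.propDecidable

noncomputable section

/-- Points of `ℝ⁵`. -/
abbrev V5 : Type := Fin 5 → ℝ

/-- Points of `ℝ³`. -/
abbrev V3 : Type := Fin 3 → ℝ

/-- Twice the standard tetrahedron `2Δ₃ ⊂ ℝ³`. -/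
def twoDelta3 : Set V3 :=
  convexHull ℝ {![0,0,0], ![2,0,0], ![0,2,0], ![0,0,2]}

/-- The embedding `ℝ³ → ℝ⁵`, `y ↦ (a, b, y)`. -/
def emb (a b : ℝ) (y : V3) : V5 := ![a, b, y 0, y 1, y 2]

/-- The Cayley polytope `C = C(2Δ₃, 2Δ₃) ⊂ ℝ⁵`. -/
def cayley : Set V5 := convexHull ℝ (emb 1 0 '' twoDelta3 ∪ emb 0 1 '' twoDelta3)

/-- The lattice points of `2Δ₃`. -/
def latticePts3 : Set V3 := {y ∈ twoDelta3 | ∀ i, ∃ n : ℤ, y i = (n : ℝ)}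

/-- The set `A` of the 20 lattice points of the Cayley polytope. -/
def cayleyPts : Set V5 := emb 1 0 '' latticePts3 ∪ emb 0 1 '' latticePts3

-- auxiliary
def wZ : Fin 4 → Fin 3 → ℤ := ![![0,0,0],![2,0,0],![0,2,0],![0,0,2]]

def w (i : Fin 4) : V3 := fun k => ((wZ i k : ℤ) : ℝ)

def md (i j : Fin 4) : V3 := midpoint ℝ (w i) (w j)

lemma wZ_eval : ∀ i k, wZ i k = if i = k.succ then 2 else 0 := by decide

lemma w_apply (i : Fin 4) (k : Fin 3) : w i k = if i = k.succ then 2 else 0 := by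
  rw [w, wZ_eval]; split <;> norm_num

lemma midpoint_pi_apply (a b : V3) (k : Fin 3) :
    midpoint ℝ a b k = (a k + b k) / 2 := by
  rw [midpoint_eq_smul_add]
  simp [Pi.smul_apply, Pi.add_apply]
  ring

lemma md_apply (i j : Fin 4) (k : Fin 3) :
    md i j k = ((if i = k.succ then 2 else 0) + (if j = k.succ then 2 else 0) : ℝ) / 2 := by
  rw [md, midpoint_pi_apply, w_apply, w_apply]

lemma md_self (i : Fin 4) : md i i = w i := by
  funext k; rw [md_apply, w_apply]; split <;> norm_num

lemma md_comm (i j : Fin 4) : md i j = md j i := midpoint_comm (w i) (w j)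

lemma emb_apply (a b : ℝ) (y : V3) :
    emb a b y 0 = a ∧ emb a b y 1 = b ∧ emb a b y 2 = y 0 ∧
      emb a b y 3 = y 1 ∧ emb a b y 4 = y 2 := by
  refine ⟨rfl, rfl, rfl, rfl, rfl⟩

def SP : Set V3 := {y | ∃ i j, y = md i j}

def E (c : ZMod 2) (y : V3) : V5 := if c = 0 then emb 1 0 y else emb 0 1 y

-- bounds on hull
lemma twoDelta3_subset_box :
    twoDelta3 ⊆ {y : V3 | (∀ k, 0 ≤ y k) ∧ y 0 + y 1 + y 2 ≤ 2} := by
  rw [twoDelta3]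
  apply convexHull_min
  · rintro y (rfl | rfl | rfl | rfl) <;>
      refine ⟨fun k => by fin_cases k <;> norm_num, by norm_num [Matrix.cons_val_two]⟩
  · rintro x ⟨hx1, hx2⟩ y ⟨hy1, hy2⟩ a b ha hb hab
    constructor
    · intro k
      have : (a • x + b • y) k = a * x k + b * y k := by
        simp [Pi.add_apply, Pi.smul_apply, smul_eq_mul]
      rw [this]
      exact add_nonneg (mul_nonneg ha (hx1 k)) (mul_nonneg hb (hy1 k))
    · have h0 : ∀ k, (a • x + b • y) k = a * x k + b * y k := fun k => by
        simp [Pi.add_apply, Pi.smul_apply, smul_eq_mul]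
      rw [h0, h0, h0]
      nlinarith [hx1 0, hy1 0, hx1 1, hy1 1]

lemma md_apply' (i j : Fin 4) (k : Fin 3) :
    md i j k = ((wZ i k + wZ j k : ℤ) : ℝ) / 2 := by
  rw [md, midpoint_pi_apply]
  show ((((wZ i k : ℤ) : ℝ)) + ((wZ j k : ℤ) : ℝ)) / 2 = _
  push_cast
  ring

lemma w_mem_gen (i : Fin 4) :
    w i ∈ ({![0,0,0], ![2,0,0], ![0,2,0], ![0,0,2]} : Set V3) := by
  fin_cases i
  · left; funext k; fin_cases k <;> norm_num [w, wZ, Matrix.vecHead, Matrix.vecTail]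
  · right; left; funext k; fin_cases k <;> norm_num [w, wZ, Matrix.vecHead, Matrix.vecTail]
  · right; right; left; funext k; fin_cases k <;> norm_num [w, wZ, Matrix.vecHead, Matrix.vecTail]
  · right; right; right; funext k; fin_cases k <;> norm_num [w, wZ, Matrix.vecHead, Matrix.vecTail]

lemma md_mem_twoDelta3 (i j : Fin 4) : md i j ∈ twoDelta3 := by
  have h : Convex ℝ twoDelta3 := convex_convexHull ℝ _
  have hi : w i ∈ twoDelta3 := subset_convexHull ℝ _ (w_mem_gen i)
  have hj : w j ∈ twoDelta3 := subset_convexHull ℝ _ (w_mem_gen j)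
  exact h.segment_subset hi hj (midpoint_mem_segment (w i) (w j))

lemma md_int (i j : Fin 4) (k : Fin 3) : ∃ n : ℤ, md i j k = (n : ℝ) := by
  rw [md_apply]
  refine ⟨((if i = k.succ then 2 else 0) + (if j = k.succ then 2 else 0) : ℤ) / 2, ?_⟩
  split <;> split <;> norm_num

lemma SP_subset_lattice : SP ⊆ latticePts3 := by
  rintro y ⟨i, j, rfl⟩
  exact ⟨md_mem_twoDelta3 i j, md_int i j⟩

lemma lattice_subset_SP : latticePts3 ⊆ SP := by
  rintro y ⟨hy, hint⟩
  have hbox := twoDelta3_subset_box hy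
  obtain ⟨n0, h0⟩ := hint 0
  obtain ⟨n1, h1⟩ := hint 1
  obtain ⟨n2, h2⟩ := hint 2
  have hb0 : (0:ℝ) ≤ n0 := h0 ▸ hbox.1 0
  have hb1 : (0:ℝ) ≤ n1 := h1 ▸ hbox.1 1
  have hb2 : (0:ℝ) ≤ n2 := h2 ▸ hbox.1 2
  have hs : (n0:ℝ) + n1 + n2 ≤ 2 := by rw [← h0, ← h1, ← h2]; exact hbox.2
  have hn0 : 0 ≤ n0 := by exact_mod_cast hb0
  have hn1 : 0 ≤ n1 := by exact_mod_cast hb1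
  have hn2 : 0 ≤ n2 := by exact_mod_cast hb2
  have hns : n0 + n1 + n2 ≤ 2 := by exact_mod_cast hs
  have hyext : ∀ i j : Fin 4,
      md i j 0 = (n0:ℝ) → md i j 1 = (n1:ℝ) → md i j 2 = (n2:ℝ) → y ∈ SP := by
    intro i j e0 e1 e2
    refine ⟨i, j, ?_⟩
    funext k
    fin_cases k
    · exact h0.trans e0.symm
    · exact h1.trans e1.symm
    · exact h2.trans e2.symm
  have hcases : (n0=0∧n1=0∧n2=0) ∨ (n0=0∧n1=0∧n2=1) ∨ (n0=0∧n1=0∧n2=2) ∨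
      (n0=0∧n1=1∧n2=0) ∨ (n0=0∧n1=1∧n2=1) ∨ (n0=0∧n1=2∧n2=0) ∨
      (n0=1∧n1=0∧n2=0) ∨ (n0=1∧n1=0∧n2=1) ∨ (n0=1∧n1=1∧n2=0) ∨
      (n0=2∧n1=0∧n2=0) := by omega
  rcases hcases with ⟨rfl,rfl,rfl⟩|⟨rfl,rfl,rfl⟩|⟨rfl,rfl,rfl⟩|⟨rfl,rfl,rfl⟩|⟨rfl,rfl,rfl⟩|
    ⟨rfl,rfl,rfl⟩|⟨rfl,rfl,rfl⟩|⟨rfl,rfl,rfl⟩|⟨rfl,rfl,rfl⟩|⟨rfl,rfl,rfl⟩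
  · exact hyext 0 0 (by norm_num [md_apply', wZ, Matrix.vecHead, Matrix.vecTail, Matrix.cons_val_two, Matrix.cons_val_three]) (by norm_num [md_apply', wZ, Matrix.vecHead, Matrix.vecTail, Matrix.cons_val_two, Matrix.cons_val_three]) (by norm_num [md_apply', wZ, Matrix.vecHead, Matrix.vecTail, Matrix.cons_val_two, Matrix.cons_val_three])
  · exact hyext 0 3 (by norm_num [md_apply', wZ, Matrix.vecHead, Matrix.vecTail, Matrix.cons_val_two, Matrix.cons_val_three]) (by norm_num [md_apply', wZ, Matrix.vecHead, Matrix.vecTail, Matrix.cons_val_two, Matrix.cons_val_three]) (by norm_num [md_apply', wZ, Matrix.vecHead, Matrix.vecTail, Matrix.cons_val_two, Matrix.cons_val_three])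
  · exact hyext 3 3 (by norm_num [md_apply', wZ, Matrix.vecHead, Matrix.vecTail, Matrix.cons_val_two, Matrix.cons_val_three]) (by norm_num [md_apply', wZ, Matrix.vecHead, Matrix.vecTail, Matrix.cons_val_two, Matrix.cons_val_three]) (by norm_num [md_apply', wZ, Matrix.vecHead, Matrix.vecTail, Matrix.cons_val_two, Matrix.cons_val_three])
  · exact hyext 0 2 (by norm_num [md_apply', wZ, Matrix.vecHead, Matrix.vecTail, Matrix.cons_val_two, Matrix.cons_val_three]) (by norm_num [md_apply', wZ, Matrix.vecHead, Matrix.vecTail, Matrix.cons_val_two, Matrix.cons_val_three]) (by norm_num [md_apply', wZ, Matrix.vecHead, Matrix.vecTail, Matrix.cons_val_two, Matrix.cons_val_three])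
  · exact hyext 2 3 (by norm_num [md_apply', wZ, Matrix.vecHead, Matrix.vecTail, Matrix.cons_val_two, Matrix.cons_val_three]) (by norm_num [md_apply', wZ, Matrix.vecHead, Matrix.vecTail, Matrix.cons_val_two, Matrix.cons_val_three]) (by norm_num [md_apply', wZ, Matrix.vecHead, Matrix.vecTail, Matrix.cons_val_two, Matrix.cons_val_three])
  · exact hyext 2 2 (by norm_num [md_apply', wZ, Matrix.vecHead, Matrix.vecTail, Matrix.cons_val_two, Matrix.cons_val_three]) (by norm_num [md_apply', wZ, Matrix.vecHead, Matrix.vecTail, Matrix.cons_val_two, Matrix.cons_val_three]) (by norm_num [md_apply', wZ, Matrix.vecHead, Matrix.vecTail, Matrix.cons_val_two, Matrix.cons_val_three])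
  · exact hyext 0 1 (by norm_num [md_apply', wZ, Matrix.vecHead, Matrix.vecTail, Matrix.cons_val_two, Matrix.cons_val_three]) (by norm_num [md_apply', wZ, Matrix.vecHead, Matrix.vecTail, Matrix.cons_val_two, Matrix.cons_val_three]) (by norm_num [md_apply', wZ, Matrix.vecHead, Matrix.vecTail, Matrix.cons_val_two, Matrix.cons_val_three])
  · exact hyext 1 3 (by norm_num [md_apply', wZ, Matrix.vecHead, Matrix.vecTail, Matrix.cons_val_two, Matrix.cons_val_three]) (by norm_num [md_apply', wZ, Matrix.vecHead, Matrix.vecTail, Matrix.cons_val_two, Matrix.cons_val_three]) (by norm_num [md_apply', wZ, Matrix.vecHead, Matrix.vecTail, Matrix.cons_val_two, Matrix.cons_val_three])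
  · exact hyext 1 2 (by norm_num [md_apply', wZ, Matrix.vecHead, Matrix.vecTail, Matrix.cons_val_two, Matrix.cons_val_three]) (by norm_num [md_apply', wZ, Matrix.vecHead, Matrix.vecTail, Matrix.cons_val_two, Matrix.cons_val_three]) (by norm_num [md_apply', wZ, Matrix.vecHead, Matrix.vecTail, Matrix.cons_val_two, Matrix.cons_val_three])
  · exact hyext 1 1 (by norm_num [md_apply', wZ, Matrix.vecHead, Matrix.vecTail, Matrix.cons_val_two, Matrix.cons_val_three]) (by norm_num [md_apply', wZ, Matrix.vecHead, Matrix.vecTail, Matrix.cons_val_two, Matrix.cons_val_three]) (by norm_num [md_apply', wZ, Matrix.vecHead, Matrix.vecTail, Matrix.cons_val_two, Matrix.cons_val_three])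

lemma lattice_eq_SP : latticePts3 = SP :=
  Set.Subset.antisymm lattice_subset_SP SP_subset_lattice

def tail35 (x : V5) : V3 := ![x 2, x 3, x 4]

lemma zmod2_cases : ∀ c : ZMod 2, c = 0 ∨ c = 1 := by decide

lemma E_zero (y : V3) : E 0 y = emb 1 0 y := if_pos rfl

lemma E_one (y : V3) : E 1 y = emb 0 1 y := if_neg (by decide)

lemma mem_cayleyPts_iff (p : V5) :
    p ∈ cayleyPts ↔ ∃ c i j, p = E c (md i j) := by
  rw [cayleyPts, lattice_eq_SP]
  constructor
  · rintro (⟨y, ⟨i, j, rfl⟩, rfl⟩ | ⟨y, ⟨i, j, rfl⟩, rfl⟩)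
    · exact ⟨0, i, j, (E_zero _).symm⟩
    · exact ⟨1, i, j, (E_one _).symm⟩
  · rintro ⟨c, i, j, rfl⟩
    rcases zmod2_cases c with rfl | rfl
    · exact Or.inl ⟨md i j, ⟨i, j, rfl⟩, (E_zero _).symm⟩
    · exact Or.inr ⟨md i j, ⟨i, j, rfl⟩, (E_one _).symm⟩

lemma tail35_E (c : ZMod 2) (y : V3) : tail35 (E c y) = y := by
  rcases zmod2_cases c with rfl | rfl <;>
  · funext k
    fin_cases k <;> simp [tail35, E_zero, E_one, emb]

lemma E_coord0 (c : ZMod 2) (y : V3) : E c y 0 = if c = 0 then 1 else 0 := by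
  rcases zmod2_cases c with rfl | rfl
  · rw [E_zero, if_pos rfl]; rfl
  · rw [E_one, if_neg (by decide)]; rfl

lemma E_inj {c c' : ZMod 2} {y y' : V3} (h : E c y = E c' y') : c = c' ∧ y = y' := by
  have h0 : E c y 0 = E c' y' 0 := congrFun h 0
  rw [E_coord0, E_coord0] at h0
  have hc : c = c' := by
    rcases zmod2_cases c with rfl | rfl <;> rcases zmod2_cases c' with rfl | rfl <;>
      first | rfl | (norm_num at h0)
  refine ⟨hc, ?_⟩
  have := congrArg tail35 h
  rwa [tail35_E, tail35_E] at this

lemma midpoint_pi_apply5 (a b : V5) (k : Fin 5) :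
    midpoint ℝ a b k = (a k + b k) / 2 := by
  rw [midpoint_eq_smul_add]
  simp [Pi.smul_apply, Pi.add_apply]
  ring

lemma E_midpoint (c : ZMod 2) (a b : V3) :
    E c (midpoint ℝ a b) = midpoint ℝ (E c a) (E c b) := by
  rcases zmod2_cases c with rfl | rfl <;>
  · funext k
    rw [midpoint_pi_apply5]
    fin_cases k <;>
      simp [E_zero, E_one, emb, midpoint_eq_smul_add, smul_eq_mul, Pi.add_apply,
        Pi.smul_apply] <;> ring

lemma tail35_midpoint (a b : V5) :
    tail35 (midpoint ℝ a b) = midpoint ℝ (tail35 a) (tail35 b) := by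
  funext k
  rw [midpoint_pi_apply]
  fin_cases k <;>
    simp [tail35, midpoint_eq_smul_add, smul_eq_mul, Pi.add_apply, Pi.smul_apply] <;> ring

lemma md_bounds (i j : Fin 4) :
    (∀ k, 0 ≤ md i j k) ∧ md i j 0 + md i j 1 + md i j 2 ≤ 2 :=
  twoDelta3_subset_box (md_mem_twoDelta3 i j)

lemma w_eval' : ∀ (i : Fin 4) (k : Fin 3), w i k = ((wZ i k : ℤ) : ℝ) := fun _ _ => rfl

lemma w_inj : Function.Injective w := by
  intro i j h
  have h' : wZ i = wZ j := funext fun k => by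
    have := congrFun h k
    rw [w_eval', w_eval'] at this
    exact_mod_cast this
  have hd : ∀ i j : Fin 4, wZ i = wZ j → i = j := by decide
  exact hd i j h'

lemma w_eval : ∀ (i : Fin 4) (k : Fin 3), w i k = ((wZ i k : ℤ) : ℝ) := fun _ _ => rfl

lemma vertex_not_midpoint (i : Fin 4) {a b : V3} (ha : a ∈ SP) (hb : b ∈ SP)
    (h : midpoint ℝ a b = w i) : a = b := by
  obtain ⟨ia, ja, rfl⟩ := ha
  obtain ⟨ib, jb, rfl⟩ := hb
  obtain ⟨hA, hAs⟩ := md_bounds ia ja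
  obtain ⟨hB, hBs⟩ := md_bounds ib jb
  have e : ∀ k, md ia ja k + md ib jb k = 2 * w i k := fun k => by
    have := congrFun h k
    rw [midpoint_pi_apply] at this
    linarith
  have e0 := e 0; have e1 := e 1; have e2 := e 2
  have a0 := hA 0; have a1 := hA 1; have a2 := hA 2
  have b0 := hB 0; have b1 := hB 1; have b2 := hB 2
  fin_cases i <;> rw [w_eval'] at e0 e1 e2 <;>
    norm_num [wZ, Matrix.vecHead, Matrix.vecTail, Matrix.cons_val_two] at e0 e1 e2 <;>
  · have c0 : md ia ja 0 = md ib jb 0 := by linarith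
    have c1 : md ia ja 1 = md ib jb 1 := by linarith
    have c2 : md ia ja 2 = md ib jb 2 := by linarith
    funext k
    fin_cases k
    exacts [c0, c1, c2]

def bar (x : V5) : Fin 4 → ℝ :=
  Fin.cons (x 0 + x 1 - (x 2 + x 3 + x 4) / 2) ![x 2 / 2, x 3 / 2, x 4 / 2]

def F (π : Equiv.Perm (Fin 4)) (ε : ZMod 2) (x : V5) : V5 :=
  ![if ε = 0 then x 0 else x 1, if ε = 0 then x 1 else x 0,
    2 * bar x (π⁻¹ 1), 2 * bar x (π⁻¹ 2), 2 * bar x (π⁻¹ 3)]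

lemma E_coord1 (c : ZMod 2) (y : V3) : E c y 1 = if c = 0 then 0 else 1 := by
  rcases zmod2_cases c with rfl | rfl
  · rw [if_pos rfl]; rfl
  · rw [if_neg (by decide)]; rfl

lemma E_tail (c : ZMod 2) (y : V3) :
    E c y 2 = y 0 ∧ E c y 3 = y 1 ∧ E c y 4 = y 2 := by
  rcases zmod2_cases c with rfl | rfl <;> exact ⟨rfl, rfl, rfl⟩

lemma E_sum01 (c : ZMod 2) (y : V3) : E c y 0 + E c y 1 = 1 := by
  rcases zmod2_cases c with rfl | rfl
  · show (1:ℝ) + 0 = 1; norm_num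
  · show (0:ℝ) + 1 = 1; norm_num

lemma sumwZ : ∀ i : Fin 4, wZ i 0 + wZ i 1 + wZ i 2 = if i = 0 then 0 else 2 := by decide

lemma wZcast (i : Fin 4) (k : Fin 3) :
    ((wZ i k : ℤ) : ℝ) = if i = k.succ then 2 else 0 := by
  rw [wZ_eval]; split <;> norm_num

lemma bar_E_md (c : ZMod 2) (i j t : Fin 4) :
    bar (E c (md i j)) t
      = ((if i = t then (1:ℝ) else 0) + (if j = t then 1 else 0)) / 2 := by
  obtain ⟨t2, t3, t4⟩ := E_tail c (md i j)
  have hsum := E_sum01 c (md i j)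
  induction t using Fin.cases with
  | zero =>
    have h0 : bar (E c (md i j)) 0
        = E c (md i j) 0 + E c (md i j) 1
          - (E c (md i j) 2 + E c (md i j) 3 + E c (md i j) 4) / 2 := rfl
    rw [h0, t2, t3, t4, md_apply', md_apply', md_apply']
    have hi := sumwZ i; have hj := sumwZ j
    push_cast
    split_ifs with h1 h2 h2
    · rw [if_pos h1] at hi; rw [if_pos h2] at hj
      have hi' : (wZ i 0 : ℝ) + wZ i 1 + wZ i 2 = 0 := by exact_mod_cast hi
      have hj' : (wZ j 0 : ℝ) + wZ j 1 + wZ j 2 = 0 := by exact_mod_cast hj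
      linarith
    · rw [if_pos h1] at hi; rw [if_neg h2] at hj
      have hi' : (wZ i 0 : ℝ) + wZ i 1 + wZ i 2 = 0 := by exact_mod_cast hi
      have hj' : (wZ j 0 : ℝ) + wZ j 1 + wZ j 2 = 2 := by exact_mod_cast hj
      linarith
    · rw [if_neg h1] at hi; rw [if_pos h2] at hj
      have hi' : (wZ i 0 : ℝ) + wZ i 1 + wZ i 2 = 2 := by exact_mod_cast hi
      have hj' : (wZ j 0 : ℝ) + wZ j 1 + wZ j 2 = 0 := by exact_mod_cast hj
      linarith
    · rw [if_neg h1] at hi; rw [if_neg h2] at hj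
      have hi' : (wZ i 0 : ℝ) + wZ i 1 + wZ i 2 = 2 := by exact_mod_cast hi
      have hj' : (wZ j 0 : ℝ) + wZ j 1 + wZ j 2 = 2 := by exact_mod_cast hj
      linarith
  | succ k =>
    have h0 : bar (E c (md i j)) k.succ
        = ![E c (md i j) 2 / 2, E c (md i j) 3 / 2, E c (md i j) 4 / 2] k :=
      Fin.cons_succ _ _ _
    rw [h0]
    fin_cases k
    · have : (![E c (md i j) 2 / 2, E c (md i j) 3 / 2, E c (md i j) 4 / 2]
          (⟨0, by norm_num⟩ : Fin 3)) = E c (md i j) 2 / 2 := rfl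
      rw [this, t2, md_apply']
      push_cast [wZcast]
      split_ifs <;> norm_num
    · have : (![E c (md i j) 2 / 2, E c (md i j) 3 / 2, E c (md i j) 4 / 2]
          (⟨1, by norm_num⟩ : Fin 3)) = E c (md i j) 3 / 2 := rfl
      rw [this, t3, md_apply']
      push_cast [wZcast]
      split_ifs <;> norm_num
    · have : (![E c (md i j) 2 / 2, E c (md i j) 3 / 2, E c (md i j) 4 / 2]
          (⟨2, by norm_num⟩ : Fin 3)) = E c (md i j) 4 / 2 := rfl
      rw [this, t4, md_apply']
      push_cast [wZcast]
      split_ifs <;> norm_num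

lemma zmod2_add_cases :
    ∀ c e : ZMod 2, (c = 0 ∧ e = 0 ∧ c + e = 0) ∨ (c = 0 ∧ e = 1 ∧ c + e = 1) ∨
      (c = 1 ∧ e = 0 ∧ c + e = 1) ∨ (c = 1 ∧ e = 1 ∧ c + e = 0) := by decide

lemma fin_succ_eval :
    (Fin.succ (0 : Fin 3) = (1 : Fin 4)) ∧ (Fin.succ (1 : Fin 3) = (2 : Fin 4)) ∧
      (Fin.succ (2 : Fin 3) = (3 : Fin 4)) := by decide

lemma zd1 : (((0:ZMod 2) = 0) = True) := eq_true (by decide)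
lemma zd2 : (((1:ZMod 2) = 0) = False) := eq_false (by decide)
lemma zd3 : (((0:ZMod 2)+0 = 0) = True) := eq_true (by decide)
lemma zd4 : (((0:ZMod 2)+1 = 0) = False) := eq_false (by decide)
lemma zd5 : (((1:ZMod 2)+0 = 0) = False) := eq_false (by decide)
lemma zd6 : (((1:ZMod 2)+1 = 0) = True) := eq_true (by decide)

lemma F_E_md (π : Equiv.Perm (Fin 4)) (ε : ZMod 2) (c : ZMod 2) (i j : Fin 4) :
    F π ε (E c (md i j)) = E (c + ε) (md (π i) (π j)) := by
  funext k
  obtain ⟨s1, s2, s3⟩ := fin_succ_eval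
  have tailEq : ∀ t : Fin 3,
      2 * bar (E c (md i j)) (π⁻¹ t.succ) = md (π i) (π j) t := by
    intro t
    rw [bar_E_md, md_apply']
    push_cast [wZcast]
    have e1 : (i = π⁻¹ t.succ) ↔ (π i = t.succ) := by
      rw [Equiv.Perm.inv_def, Equiv.eq_symm_apply]
    have e2 : (j = π⁻¹ t.succ) ↔ (π j = t.succ) := by
      rw [Equiv.Perm.inv_def, Equiv.eq_symm_apply]
    rw [if_congr e1 rfl rfl, if_congr e2 rfl rfl]
    split_ifs <;> norm_num
  fin_cases k
  · show (if ε = 0 then E c (md i j) 0 else E c (md i j) 1) = E (c + ε) (md (π i) (π j)) 0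
    rw [E_coord0, E_coord1, E_coord0]
    rcases zmod2_add_cases c ε with ⟨h1,h2,h3⟩|⟨h1,h2,h3⟩|⟨h1,h2,h3⟩|⟨h1,h2,h3⟩ <;>
      rw [h1, h2] <;>
      simp only [zd1, zd2, zd3, zd4, zd5, zd6, if_true, if_false]
  · show (if ε = 0 then E c (md i j) 1 else E c (md i j) 0) = E (c + ε) (md (π i) (π j)) 1
    rw [E_coord0, E_coord1, E_coord1]
    rcases zmod2_add_cases c ε with ⟨h1,h2,h3⟩|⟨h1,h2,h3⟩|⟨h1,h2,h3⟩|⟨h1,h2,h3⟩ <;>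
      rw [h1, h2] <;>
      simp only [zd1, zd2, zd3, zd4, zd5, zd6, if_true, if_false]
  · show 2 * bar (E c (md i j)) (π⁻¹ 1) = E (c + ε) (md (π i) (π j)) 2
    rw [(E_tail _ _).1, ← s1, tailEq 0]
  · show 2 * bar (E c (md i j)) (π⁻¹ 2) = E (c + ε) (md (π i) (π j)) 3
    rw [(E_tail _ _).2.1, ← s2, tailEq 1]
  · show 2 * bar (E c (md i j)) (π⁻¹ 3) = E (c + ε) (md (π i) (π j)) 4
    rw [(E_tail _ _).2.2, ← s3, tailEq 2]

lemma bar_sum (x : V5) : bar x 0 + bar x 1 + bar x 2 + bar x 3 = x 0 + x 1 := by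
  show (x 0 + x 1 - (x 2 + x 3 + x 4)/2) + x 2/2 + x 3/2 + x 4/2 = x 0 + x 1
  ring

lemma bar_perm_sum (x : V5) (e : Equiv.Perm (Fin 4)) :
    bar x (e 0) + bar x (e 1) + bar x (e 2) + bar x (e 3)
      = bar x 0 + bar x 1 + bar x 2 + bar x 3 := by
  have h := Equiv.sum_comp e (bar x)
  rw [Fin.sum_univ_four, Fin.sum_univ_four] at h
  exact h

lemma bar_F (π' : Equiv.Perm (Fin 4)) (ε' : ZMod 2) (x : V5) (t : Fin 4) :
    bar (F π' ε' x) t = bar x (π'⁻¹ t) := by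
  induction t using Fin.cases with
  | zero =>
    have h0 : bar (F π' ε' x) 0
        = F π' ε' x 0 + F π' ε' x 1
          - (F π' ε' x 2 + F π' ε' x 3 + F π' ε' x 4) / 2 := rfl
    have h01 : F π' ε' x 0 + F π' ε' x 1 = x 0 + x 1 := by
      show (if ε' = 0 then x 0 else x 1) + (if ε' = 0 then x 1 else x 0) = x 0 + x 1
      split_ifs <;> ring
    have hps := bar_perm_sum x π'⁻¹
    rw [bar_sum] at hps
    have h2 : F π' ε' x 2 = 2 * bar x (π'⁻¹ 1) := rfl
    have h3 : F π' ε' x 3 = 2 * bar x (π'⁻¹ 2) := rfl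
    have h4 : F π' ε' x 4 = 2 * bar x (π'⁻¹ 3) := rfl
    rw [h0, h01, h2, h3, h4]
    linarith
  | succ k =>
    have h0 : bar (F π' ε' x) k.succ
        = ![F π' ε' x 2 / 2, F π' ε' x 3 / 2, F π' ε' x 4 / 2] k :=
      Fin.cons_succ _ _ _
    rw [h0]
    obtain ⟨s1, s2, s3⟩ := fin_succ_eval
    fin_cases k
    · show F π' ε' x 2 / 2 = bar x (π'⁻¹ (Fin.succ 0))
      rw [s1]; show 2 * bar x (π'⁻¹ 1) / 2 = _; ring
    · show F π' ε' x 3 / 2 = bar x (π'⁻¹ (Fin.succ 1))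
      rw [s2]; show 2 * bar x (π'⁻¹ 2) / 2 = _; ring
    · show F π' ε' x 4 / 2 = bar x (π'⁻¹ (Fin.succ 2))
      rw [s3]; show 2 * bar x (π'⁻¹ 3) / 2 = _; ring

lemma F_comp (π π' : Equiv.Perm (Fin 4)) (ε ε' : ZMod 2) (x : V5) :
    F π ε (F π' ε' x) = F (π * π') (ε + ε') x := by
  funext k
  fin_cases k
  · show (if ε = 0 then F π' ε' x 0 else F π' ε' x 1)
      = (if ε + ε' = 0 then x 0 else x 1)
    have h0 : F π' ε' x 0 = (if ε' = 0 then x 0 else x 1) := rfl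
    have h1 : F π' ε' x 1 = (if ε' = 0 then x 1 else x 0) := rfl
    rw [h0, h1]
    rcases zmod2_add_cases ε' ε with ⟨h1,h2,h3⟩|⟨h1,h2,h3⟩|⟨h1,h2,h3⟩|⟨h1,h2,h3⟩ <;>
      rw [h1, h2] <;>
      simp only [zd1, zd2, zd3, zd4, zd5, zd6, if_true, if_false]
  · show (if ε = 0 then F π' ε' x 1 else F π' ε' x 0)
      = (if ε + ε' = 0 then x 1 else x 0)
    have h0 : F π' ε' x 0 = (if ε' = 0 then x 0 else x 1) := rfl
    have h1 : F π' ε' x 1 = (if ε' = 0 then x 1 else x 0) := rfl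
    rw [h0, h1]
    rcases zmod2_add_cases ε' ε with ⟨h1,h2,h3⟩|⟨h1,h2,h3⟩|⟨h1,h2,h3⟩|⟨h1,h2,h3⟩ <;>
      rw [h1, h2] <;>
      simp only [zd1, zd2, zd3, zd4, zd5, zd6, if_true, if_false]
  · show 2 * bar (F π' ε' x) (π⁻¹ 1) = 2 * bar x ((π * π')⁻¹ 1)
    rw [bar_F, mul_inv_rev, Equiv.Perm.mul_apply]
  · show 2 * bar (F π' ε' x) (π⁻¹ 2) = 2 * bar x ((π * π')⁻¹ 2)
    rw [bar_F, mul_inv_rev, Equiv.Perm.mul_apply]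
  · show 2 * bar (F π' ε' x) (π⁻¹ 3) = 2 * bar x ((π * π')⁻¹ 3)
    rw [bar_F, mul_inv_rev, Equiv.Perm.mul_apply]

lemma F_id (x : V5) : F 1 0 x = x := by
  funext k
  fin_cases k
  · show (if (0:ZMod 2) = 0 then x 0 else x 1) = x 0; rw [if_pos rfl]
  · show (if (0:ZMod 2) = 0 then x 1 else x 0) = x 1; rw [if_pos rfl]
  · show 2 * bar x ((1:Equiv.Perm (Fin 4))⁻¹ 1) = x 2
    show 2 * bar x 1 = x 2; show 2 * (x 2 / 2) = x 2; ring
  · show 2 * bar x ((1:Equiv.Perm (Fin 4))⁻¹ 2) = x 3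
    show 2 * bar x 2 = x 3; show 2 * (x 3 / 2) = x 3; ring
  · show 2 * bar x ((1:Equiv.Perm (Fin 4))⁻¹ 3) = x 4
    show 2 * bar x 3 = x 4; show 2 * (x 4 / 2) = x 4; ring

lemma bar_add (x y : V5) (t : Fin 4) : bar (x + y) t = bar x t + bar y t := by
  induction t using Fin.cases with
  | zero =>
    show (x + y) 0 + (x + y) 1 - ((x + y) 2 + (x + y) 3 + (x + y) 4) / 2 = _
    simp only [Pi.add_apply]
    show _ = (x 0 + x 1 - (x 2 + x 3 + x 4) / 2) + (y 0 + y 1 - (y 2 + y 3 + y 4) / 2)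
    ring
  | succ k =>
    have h1 : bar (x + y) k.succ
        = ![(x + y) 2 / 2, (x + y) 3 / 2, (x + y) 4 / 2] k := Fin.cons_succ _ _ _
    have h2 : bar x k.succ = ![x 2 / 2, x 3 / 2, x 4 / 2] k := Fin.cons_succ _ _ _
    have h3 : bar y k.succ = ![y 2 / 2, y 3 / 2, y 4 / 2] k := Fin.cons_succ _ _ _
    rw [h1, h2, h3]
    fin_cases k <;> simp [Pi.add_apply] <;> ring

lemma bar_smul (r : ℝ) (x : V5) (t : Fin 4) : bar (r • x) t = r * bar x t := by
  induction t using Fin.cases with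
  | zero =>
    show (r • x) 0 + (r • x) 1 - ((r • x) 2 + (r • x) 3 + (r • x) 4) / 2 = _
    simp only [Pi.smul_apply, smul_eq_mul]
    show _ = r * (x 0 + x 1 - (x 2 + x 3 + x 4) / 2)
    ring
  | succ k =>
    have h1 : bar (r • x) k.succ
        = ![(r • x) 2 / 2, (r • x) 3 / 2, (r • x) 4 / 2] k := Fin.cons_succ _ _ _
    have h2 : bar x k.succ = ![x 2 / 2, x 3 / 2, x 4 / 2] k := Fin.cons_succ _ _ _
    rw [h1, h2]
    fin_cases k <;> simp [Pi.smul_apply, smul_eq_mul] <;> ring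

def FL (π : Equiv.Perm (Fin 4)) (ε : ZMod 2) : V5 →ₗ[ℝ] V5 where
  toFun := F π ε
  map_add' x y := by
    funext k
    fin_cases k
    · show (if ε = 0 then (x + y) 0 else (x + y) 1) = F π ε x 0 + F π ε y 0
      show _ = (if ε = 0 then x 0 else x 1) + (if ε = 0 then y 0 else y 1)
      split_ifs <;> simp [Pi.add_apply]
    · show (if ε = 0 then (x + y) 1 else (x + y) 0) = F π ε x 1 + F π ε y 1
      show _ = (if ε = 0 then x 1 else x 0) + (if ε = 0 then y 1 else y 0)
      split_ifs <;> simp [Pi.add_apply]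
    · show 2 * bar (x + y) (π⁻¹ 1) = F π ε x 2 + F π ε y 2
      rw [bar_add]; show _ = 2 * bar x (π⁻¹ 1) + 2 * bar y (π⁻¹ 1); ring
    · show 2 * bar (x + y) (π⁻¹ 2) = F π ε x 3 + F π ε y 3
      rw [bar_add]; show _ = 2 * bar x (π⁻¹ 2) + 2 * bar y (π⁻¹ 2); ring
    · show 2 * bar (x + y) (π⁻¹ 3) = F π ε x 4 + F π ε y 4
      rw [bar_add]; show _ = 2 * bar x (π⁻¹ 3) + 2 * bar y (π⁻¹ 3); ring
  map_smul' r x := by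
    funext k
    fin_cases k
    · show (if ε = 0 then (r • x) 0 else (r • x) 1) = r * F π ε x 0
      show _ = r * (if ε = 0 then x 0 else x 1)
      split_ifs <;> simp [Pi.smul_apply]
    · show (if ε = 0 then (r • x) 1 else (r • x) 0) = r * F π ε x 1
      show _ = r * (if ε = 0 then x 1 else x 0)
      split_ifs <;> simp [Pi.smul_apply]
    · show 2 * bar (r • x) (π⁻¹ 1) = r * F π ε x 2
      rw [bar_smul]; show _ = r * (2 * bar x (π⁻¹ 1)); ring
    · show 2 * bar (r • x) (π⁻¹ 2) = r * F π ε x 3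
      rw [bar_smul]; show _ = r * (2 * bar x (π⁻¹ 2)); ring
    · show 2 * bar (r • x) (π⁻¹ 3) = r * F π ε x 4
      rw [bar_smul]; show _ = r * (2 * bar x (π⁻¹ 3)); ring

lemma F_mem (π : Equiv.Perm (Fin 4)) (ε : ZMod 2) {p : V5} (hp : p ∈ cayleyPts) :
    F π ε p ∈ cayleyPts := by
  rw [mem_cayleyPts_iff] at hp ⊢
  obtain ⟨c, i, j, rfl⟩ := hp
  exact ⟨c + ε, π i, π j, F_E_md π ε c i j⟩

def toPerm (π : Equiv.Perm (Fin 4)) (ε : ZMod 2) : Equiv.Perm ↥cayleyPts where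
  toFun p := ⟨F π ε ↑p, F_mem π ε p.2⟩
  invFun p := ⟨F π⁻¹ (-ε) ↑p, F_mem π⁻¹ (-ε) p.2⟩
  left_inv p := by
    apply Subtype.ext
    show F π⁻¹ (-ε) (F π ε ↑p) = ↑p
    rw [F_comp, inv_mul_cancel, neg_add_cancel, F_id]
  right_inv p := by
    apply Subtype.ext
    show F π ε (F π⁻¹ (-ε) ↑p) = ↑p
    rw [F_comp, mul_inv_cancel, add_neg_cancel, F_id]

def Phi : Equiv.Perm (Fin 4) × Multiplicative (ZMod 2) →* Equiv.Perm ↥cayleyPts where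
  toFun x := toPerm x.1 x.2.toAdd
  map_one' := by
    apply Equiv.ext
    intro p
    apply Subtype.ext
    show F 1 (Multiplicative.toAdd 1) ↑p = ↑p
    rw [toAdd_one, F_id]
  map_mul' x y := by
    apply Equiv.ext
    intro p
    apply Subtype.ext
    show F (x.1 * y.1) (Multiplicative.toAdd (x.2 * y.2)) ↑p
        = F x.1 x.2.toAdd (F y.1 y.2.toAdd ↑p)
    rw [F_comp, toAdd_mul]

lemma Phi_inj : Function.Injective Phi := by
  rw [injective_iff_map_eq_one]
  rintro ⟨π, ε⟩ ha
  have hp : ∀ p : ↥cayleyPts, F π ε.toAdd ↑p = ↑p := by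
    intro p
    have := congrArg Subtype.val (Equiv.ext_iff.mp ha p)
    exact this
  have hq0 : (E 0 (md 0 0) : V5) ∈ cayleyPts := (mem_cayleyPts_iff _).mpr ⟨0,0,0,rfl⟩
  have h1 : E (0 + ε.toAdd) (md (π 0) (π 0)) = E 0 (md 0 0) := by
    have := hp ⟨_, hq0⟩
    rwa [F_E_md] at this
  have hc : ε.toAdd = 0 := by
    have h0 := congrFun h1 0
    rw [E_coord0, E_coord0] at h0
    by_contra hne
    have hne' : ¬((0 : ZMod 2) + ε.toAdd = 0) := by
      intro h; exact hne (by rwa [zero_add] at h)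
    rw [if_neg hne', if_pos rfl] at h0
    norm_num at h0
  have hπ : ∀ t, π t = t := by
    intro t
    have hqt : (E 0 (md t t) : V5) ∈ cayleyPts := (mem_cayleyPts_iff _).mpr ⟨0,t,t,rfl⟩
    have h2 : E (0 + ε.toAdd) (md (π t) (π t)) = E 0 (md t t) := by
      have := hp ⟨_, hqt⟩
      rwa [F_E_md] at this
    obtain ⟨-, hy⟩ := E_inj h2
    have hw : w (π t) = w t := by
      rw [← md_self, ← md_self]; exact hy
    exact w_inj hw
  have hπ1 : π = 1 := Equiv.ext hπ
  have hε1 : ε = 1 := by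
    have : Multiplicative.ofAdd ε.toAdd = Multiplicative.ofAdd 0 := congrArg _ hc
    simpa using this
  rw [hπ1, hε1]
  rfl

lemma w_mem_SP (i : Fin 4) : w i ∈ SP := ⟨i, i, (md_self i).symm⟩

lemma md_mem_SP (i j : Fin 4) : md i j ∈ SP := ⟨i, j, rfl⟩

lemma SP_finite : SP.Finite := by
  have h : SP = Set.range (fun p : Fin 4 × Fin 4 => md p.1 p.2) := by
    ext y
    constructor
    · rintro ⟨i, j, rfl⟩; exact ⟨(i, j), rfl⟩
    · rintro ⟨⟨i, j⟩, rfl⟩; exact ⟨i, j, rfl⟩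
  rw [h]
  exact Set.finite_range _

lemma E_mem_cayleyPts (c : ZMod 2) {y : V3} (hy : y ∈ SP) : E c y ∈ cayleyPts := by
  obtain ⟨i, j, rfl⟩ := hy
  exact (mem_cayleyPts_iff _).mpr ⟨c, i, j, rfl⟩

lemma val01 {p : V5} (hp : p ∈ cayleyPts) : p 0 = 0 ∨ p 0 = 1 := by
  obtain ⟨c, i, j, rfl⟩ := (mem_cayleyPts_iff p).mp hp
  rw [E_coord0]
  rcases zmod2_cases c with rfl | rfl
  · right; rw [if_pos rfl]
  · left; rw [if_neg (by decide)]

lemma mid01 {a b m : ℝ} (ha : a = 0 ∨ a = 1) (hb : b = 0 ∨ b = 1)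
    (hm : m = 0 ∨ m = 1) (h : m = (a + b) / 2) : a = b := by
  rcases ha with rfl | rfl <;> rcases hb with rfl | rfl <;>
    rcases hm with rfl | rfl <;> first | rfl | norm_num at h

lemma tail35_sub (a b : V5) : tail35 (a - b) = tail35 a - tail35 b := by
  funext k
  fin_cases k <;> simp [tail35, Pi.sub_apply]

lemma zmod2_ne : ∀ a b : ZMod 2, a ≠ b → b = a + 1 := by decide

theorem hard_direction (σ : Equiv.Perm ↥cayleyPts) (f : V5 →ᵃ[ℝ] V5)
    (hf : ∀ p : ↥cayleyPts, f ↑p = ↑(σ p)) : σ ∈ Phi.range := by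
  classical
  have hfm : ∀ {p : V5} (hp : p ∈ cayleyPts), f p ∈ cayleyPts := by
    intro p hp
    rw [hf ⟨p, hp⟩]
    exact (σ ⟨p, hp⟩).2
  have hinj : ∀ {p q : V5} (_ : p ∈ cayleyPts) (_ : q ∈ cayleyPts),
      f p = f q → p = q := by
    intro p q hp hq h
    have h1 : (σ ⟨p, hp⟩ : V5) = σ ⟨q, hq⟩ := by rw [← hf, ← hf, h]
    have h2 : σ ⟨p, hp⟩ = σ ⟨q, hq⟩ := Subtype.ext h1
    exact congrArg Subtype.val (σ.injective h2)
  set u : ZMod 2 → V3 → ℝ := fun c y => f (E c y) 0 with hu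
  have hu01 : ∀ (c : ZMod 2) {y}, y ∈ SP → (u c y = 0 ∨ u c y = 1) := by
    intro c y hy
    exact val01 (hfm (E_mem_cayleyPts c hy))
  have humid : ∀ (c : ZMod 2) (a b : V3), u c (midpoint ℝ a b) = (u c a + u c b) / 2 := by
    intro c a b
    show f (E c (midpoint ℝ a b)) 0 = _
    rw [E_midpoint, AffineMap.map_midpoint, midpoint_pi_apply5]
  have huw : ∀ (c : ZMod 2) (i : Fin 4), u c (w i) = u c (w 0) := by
    intro c i
    have h := humid c (w 0) (w i)
    have hm : midpoint ℝ (w 0) (w i) = md 0 i := rfl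
    rw [hm] at h
    exact (mid01 (hu01 c (w_mem_SP 0)) (hu01 c (w_mem_SP i))
      (hu01 c (md_mem_SP 0 i)) h).symm
  have huconst : ∀ (c : ZMod 2) (i j : Fin 4), u c (md i j) = u c (w 0) := by
    intro c i j
    have h := humid c (w i) (w j)
    have hm : midpoint ℝ (w i) (w j) = md i j := rfl
    rw [hm] at h
    have heq : u c (w i) = u c (w j) :=
      mid01 (hu01 c (w_mem_SP i)) (hu01 c (w_mem_SP j)) (hu01 c (md_mem_SP i j)) h
    rw [h, ← heq, huw c i]
    ring
  set s : ZMod 2 → ZMod 2 := fun c => if u c (w 0) = 1 then 0 else 1 with hs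
  set G : ZMod 2 → V3 → V3 := fun c y => tail35 (f (E c y)) with hG
  have himg : ∀ (c : ZMod 2) {y : V3}, y ∈ SP →
      G c y ∈ SP ∧ f (E c y) = E (s c) (G c y) := by
    intro c y hy
    obtain ⟨c', i', j', hE⟩ := (mem_cayleyPts_iff _).mp (hfm (E_mem_cayleyPts c hy))
    have hGy : G c y = md i' j' := by
      show tail35 (f (E c y)) = _
      rw [hE, tail35_E]
    have hcoord : u c y = if c' = 0 then 1 else 0 := by
      show f (E c y) 0 = _
      rw [hE, E_coord0]
    obtain ⟨i, j, rfl⟩ := hy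
    have huy : u c (md i j) = u c (w 0) := huconst c i j
    have hc' : c' = s c := by
      show c' = if u c (w 0) = 1 then (0 : ZMod 2) else 1
      by_cases h1 : u c (w 0) = 1
      · rw [if_pos h1]
        by_contra hne
        rw [if_neg hne] at hcoord
        rw [huy, h1] at hcoord
        norm_num at hcoord
      · rw [if_neg h1]
        rcases zmod2_cases c' with rfl | rfl
        · rw [if_pos rfl] at hcoord
          exact absurd (huy ▸ hcoord) h1
        · rfl
    refine ⟨hGy ▸ md_mem_SP i' j', ?_⟩
    rw [hE, hGy, hc']
  have hGmap : ∀ c : ZMod 2, Set.MapsTo (G c) SP SP := fun c y hy => (himg c hy).1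
  have hGinj : ∀ c : ZMod 2, Set.InjOn (G c) SP := by
    intro c y hy y' hy' h
    have h1 : f (E c y) = f (E c y') := by
      rw [(himg c hy).2, (himg c hy').2, h]
    have h2 := hinj (E_mem_cayleyPts c hy) (E_mem_cayleyPts c hy') h1
    exact (E_inj h2).2
  have hGbij : ∀ c : ZMod 2, Set.BijOn (G c) SP SP := fun c =>
    (SP_finite.injOn_iff_bijOn_of_mapsTo (hGmap c)).mp (hGinj c)
  have hne : s 0 ≠ s 1 := by
    intro h
    obtain ⟨y0, hy0S, hgy0⟩ := (hGbij 0).surjOn (hGmap 1 (w_mem_SP 0))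
    have h1 : f (E 0 y0) = f (E 1 (w 0)) := by
      rw [(himg 0 hy0S).2, (himg 1 (w_mem_SP 0)).2, hgy0, h]
    have h2 := hinj (E_mem_cayleyPts 0 hy0S) (E_mem_cayleyPts 1 (w_mem_SP 0)) h1
    exact absurd (E_inj h2).1 (by decide)
  set ε : ZMod 2 := s 0 with hε
  have hsc : ∀ c : ZMod 2, s c = c + ε := by
    intro c
    rcases zmod2_cases c with rfl | rfl
    · rw [zero_add]
    · rw [zmod2_ne _ _ hne, add_comm]
  -- the two halves agree
  have hEdiff : ∀ y : V3, E 0 y - E 1 y = ![1, -1, 0, 0, 0] := by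
    intro y
    funext k
    have h1 : (E 0 y - E 1 y) k = E 0 y k - E 1 y k := rfl
    rw [h1]
    fin_cases k <;> show _ - _ = _ <;> norm_num [E_zero, E_one, emb]
  have hGdiff : ∀ y : V3, G 0 y - G 1 y = tail35 (f.linear ![1, -1, 0, 0, 0]) := by
    intro y
    show tail35 (f (E 0 y)) - tail35 (f (E 1 y)) = _
    rw [← tail35_sub]
    congr 1
    have h := f.linearMap_vsub (E 0 y) (E 1 y)
    rw [vsub_eq_sub, vsub_eq_sub] at h
    rw [← h, hEdiff]
  set d : V3 := tail35 (f.linear ![1, -1, 0, 0, 0]) with hd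
  set SF : Finset V3 := SP_finite.toFinset with hSFdef
  have hSF : ∀ y, y ∈ SF ↔ y ∈ SP := fun y => SP_finite.mem_toFinset
  have hsum : ∀ c : ZMod 2, ∑ y ∈ SF, G c y = ∑ y ∈ SF, y := by
    intro c
    refine Finset.sum_bij (fun a _ => G c a) ?_ ?_ ?_ ?_
    · intro a ha
      exact (hSF _).mpr ((hGmap c) ((hSF _).mp ha))
    · intro a ha a' ha' h
      exact (hGinj c) ((hSF _).mp ha) ((hSF _).mp ha') h
    · intro b hb
      obtain ⟨a, haS, hab⟩ := (hGbij c).surjOn ((hSF _).mp hb)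
      exact ⟨a, (hSF _).mpr haS, hab⟩
    · intro a _
      rfl
  have hd0 : d = 0 := by
    have h1 : ∑ y ∈ SF, G 0 y = ∑ y ∈ SF, (G 1 y + d) :=
      Finset.sum_congr rfl fun y _ => sub_eq_iff_eq_add'.mp (hGdiff y)
    rw [Finset.sum_add_distrib, Finset.sum_const, hsum 0, hsum 1] at h1
    have h2 : SF.card • d = 0 := (left_eq_add.mp h1).symm ▸ rfl
    have h3 : ((SF.card : ℝ)) • d = 0 := by rw [Nat.cast_smul_eq_nsmul]; exact h2
    rcases smul_eq_zero.mp h3 with h | h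
    · exfalso
      have hcard : 0 < SF.card :=
        Finset.card_pos.mpr ⟨md 0 0, (hSF _).mpr (md_mem_SP 0 0)⟩
      have : (SF.card : ℝ) ≠ 0 := Nat.cast_ne_zero.mpr hcard.ne'
      exact this h
    · exact h
  have hGG : ∀ y : V3, G 0 y = G 1 y := by
    intro y
    have h := hGdiff y
    rw [hd0] at h
    exact sub_eq_zero.mp h
  have G_mid : ∀ (c : ZMod 2) (a b : V3),
      G c (midpoint ℝ a b) = midpoint ℝ (G c a) (G c b) := by
    intro c a b
    show tail35 (f (E c (midpoint ℝ a b))) = _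
    rw [E_midpoint, AffineMap.map_midpoint, tail35_midpoint]
  -- vertices go to vertices
  set M : Set V3 :=
    {m : V3 | m ∈ SP ∧ ∃ a, a ∈ SP ∧ ∃ b, b ∈ SP ∧ a ≠ b ∧ m = midpoint ℝ a b} with hM
  have hMsub : M ⊆ SP := fun m hm => hm.1
  have hMmap : Set.MapsTo (G 0) M M := by
    rintro m ⟨hmS, a, haS, b, hbS, hab, rfl⟩
    exact ⟨(hGmap 0) hmS, G 0 a, (hGmap 0) haS, G 0 b, (hGmap 0) hbS,
      fun h => hab ((hGinj 0) haS hbS h), G_mid 0 a b⟩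
  have hMfin : M.Finite := SP_finite.subset hMsub
  have hMbij : Set.BijOn (G 0) M M :=
    (hMfin.injOn_iff_bijOn_of_mapsTo hMmap).mp ((hGinj 0).mono hMsub)
  have hWnotM : ∀ i, w i ∉ M := by
    rintro i ⟨_, a, haS, b, hbS, hab, heq⟩
    exact hab (vertex_not_midpoint i haS hbS heq.symm)
  have hv : ∀ i, ∃ k, G 0 (w i) = w k := by
    intro i
    obtain ⟨ia, ja, hmd⟩ := (hGmap 0) (w_mem_SP i)
    by_cases hij : ia = ja
    · exact ⟨ia, by rw [hmd, hij, md_self]⟩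
    · exfalso
      have hMmem : G 0 (w i) ∈ M :=
        ⟨(hGmap 0) (w_mem_SP i), w ia, w_mem_SP ia, w ja, w_mem_SP ja,
          fun h => hij (w_inj h), by rw [hmd]; rfl⟩
      obtain ⟨m, hmM, hgm⟩ := hMbij.surjOn hMmem
      have hmw : m = w i := (hGinj 0) (hMsub hmM) (w_mem_SP i) hgm
      rw [hmw] at hmM
      exact hWnotM i hmM
  choose π0 hπ0 using hv
  have hπ0inj : Function.Injective π0 := by
    intro i i' h
    have h1 : G 0 (w i) = G 0 (w i') := by rw [hπ0, hπ0, h]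
    exact w_inj ((hGinj 0) (w_mem_SP i) (w_mem_SP i') h1)
  set π : Equiv.Perm (Fin 4) :=
    Equiv.ofBijective π0 (Finite.injective_iff_bijective.mp hπ0inj) with hπdef
  refine ⟨(π, Multiplicative.ofAdd ε), ?_⟩
  apply Equiv.ext
  intro p
  apply Subtype.ext
  show F π ε ↑p = ↑(σ p)
  rw [← hf p]
  obtain ⟨c, i, j, hp⟩ := (mem_cayleyPts_iff ↑p).mp p.2
  rw [hp, F_E_md]
  have hGij : G c (md i j) = md (π0 i) (π0 j) := by
    have hg0 : G 0 (md i j) = md (π0 i) (π0 j) := by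
      have hmm : md i j = midpoint ℝ (w i) (w j) := rfl
      rw [hmm, G_mid, hπ0, hπ0]
      rfl
    rcases zmod2_cases c with rfl | rfl
    · exact hg0
    · rw [← hGG]
      exact hg0
  rw [(himg c (md_mem_SP i j)).2, hGij, hsc c]
  rfl

theorem affine_symmetries_of_cayley_lattice_points :
    ∃ H : Subgroup (Equiv.Perm ↥cayleyPts),
      (H : Set (Equiv.Perm ↥cayleyPts)) =
        {σ | ∃ f : V5 →ᵃ[ℝ] V5, ∀ p : ↥cayleyPts, f ↑p = ↑(σ p)} ∧
      Nonempty (H ≃* Equiv.Perm (Fin 4) × Multiplicative (ZMod 2)) ∧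
      Nat.card H = 48 := by
  refine ⟨Phi.range, ?_, ?_, ?_⟩
  · ext σ
    simp only [Set.mem_setOf_eq, SetLike.mem_coe]
    constructor
    · rintro ⟨⟨π, ε⟩, rfl⟩
      exact ⟨(FL π ε.toAdd).toAffineMap, fun p => rfl⟩
    · rintro ⟨f, hf⟩
      exact hard_direction σ f hf
  · exact ⟨(MonoidHom.ofInjective Phi_inj).symm⟩
  · have h1 : Nat.card ↥Phi.range
        = Nat.card (Equiv.Perm (Fin 4) × Multiplicative (ZMod 2)) :=
      Nat.card_congr (MonoidHom.ofInjective Phi_inj).symm.toEquiv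
    rw [h1, Nat.card_prod]
    have h2 : Nat.card (Equiv.Perm (Fin 4)) = 24 := by
      rw [Nat.card_eq_fintype_card, Fintype.card_perm, Fintype.card_fin]
      norm_num [Nat.factorial]
    have h3 : Nat.card (Multiplicative (ZMod 2)) = 2 := by
      rw [Nat.card_eq_fintype_card]
      rfl
    rw [h2, h3]

end
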